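/- arXiv:2010.00712 — 3 statements merged into one kernel-verified Lean document; each statement's English description precedes it below -/
import Mathlib

section
/- Let n be a power of 2, let H ∈ ℝ^{n×n} be the normalized Walsh–Hadamard matrix, and let D ∈ ℝ^{n×n} be a random diagonal matrix whose diagonal entries are i.i.d. uniform on {−1,1}. Then for every x ∈ ℝ^n and every λ > 0, one has P( ‖H·D·x‖_∞ ≤ λ·‖x‖₂ ) ≥ 1 − 2n·e^{−nλ²/2}. -/
open MeasureTheory ProbabilityTheory Real
open scoped NNReal ENNReal

noncomputable section

/-- Matrix–vector product for matrices represented as functions. -/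
def matVec {a b : ℕ} (M : Fin a → Fin b → ℝ) (x : Fin b → ℝ) : Fin a → ℝ :=
  fun i => ∑ j, M i j * x j

/-- Matrix–matrix product for matrices represented as functions. -/
def matMul {a b c : ℕ} (M : Fin a → Fin b → ℝ) (N : Fin b → Fin c → ℝ) :
    Fin a → Fin c → ℝ :=
  fun i k => ∑ j, M i j * N j k

/-- Powers of a square matrix represented as a function. -/
def matPow {a : ℕ} (M : Fin a → Fin a → ℝ) : ℕ → (Fin a → Fin a → ℝ)
  | 0 => fun i j => if i = j then 1 else 0
  | k + 1 => matMul (matPow M k) M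

/-- The ℓ¹ norm on ℝ^k. -/
def l1Norm {k : ℕ} (x : Fin k → ℝ) : ℝ := ∑ i, |x i|

/-- The ℓ² norm on ℝ^k. -/
def l2Norm {k : ℕ} (x : Fin k → ℝ) : ℝ := Real.sqrt (∑ i, (x i) ^ 2)

/-- The ℓ^∞ norm on ℝ^k. -/
def lInfNorm {k : ℕ} (x : Fin k → ℝ) : ℝ := ⨆ i, |x i|

/-- The (∞,1) operator norm: `max_{x ≠ 0} ‖Kx‖₁ / ‖x‖_∞`. -/
def opNormInfOne {a b : ℕ} (K : Fin a → Fin b → ℝ) : ℝ :=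
  sSup {t : ℝ | ∃ x : Fin b → ℝ, x ≠ 0 ∧ t = l1Norm (matVec K x) / lInfNorm x}

/-- The (∞,∞) operator norm: `max_{x ≠ 0} ‖Kx‖_∞ / ‖x‖_∞`. -/
def opNormInfInf {a b : ℕ} (K : Fin a → Fin b → ℝ) : ℝ :=
  sSup {t : ℝ | ∃ x : Fin b → ℝ, x ≠ 0 ∧ t = lInfNorm (matVec K x) / lInfNorm x}

/-- The law `(1-s)·δ₀ + s·N(0,1/s)` of a single entry of a sparse Gaussian random matrix. -/
def sparseGaussianLaw (s : ℝ) : Measure ℝ :=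
  (Real.toNNReal (1 - s)) • Measure.dirac (0 : ℝ) +
    (Real.toNNReal s) • gaussianReal 0 (Real.toNNReal s)⁻¹

/-- The law of a sparse Gaussian random matrix with i.i.d. entries of law
`(1-s)·δ₀ + s·N(0,1/s)`. -/
def sparseGaussianMatrixLaw (m n : ℕ) (s : ℝ) : Measure (Fin m → Fin n → ℝ) :=
  Measure.pi fun _ : Fin m => Measure.pi fun _ : Fin n => sparseGaussianLaw s

/-- The uniform law on `{-1, 1}`. -/
def signLaw : Measure ℝ :=
  ((2 : ℝ≥0)⁻¹) • Measure.dirac (1 : ℝ) + ((2 : ℝ≥0)⁻¹) • Measure.dirac (-1 : ℝ)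

/-- The law of a vector of i.i.d. uniform ±1 signs. -/
def signVecLaw (n : ℕ) : Measure (Fin n → ℝ) := Measure.pi fun _ : Fin n => signLaw

/-- Bitwise dot product of the binary representations of two natural numbers. -/
def bitDot (i j : ℕ) : ℕ :=
  ∑ k ∈ Finset.range i.size, if i.testBit k && j.testBit k then 1 else 0

/-- The normalized Walsh–Hadamard matrix `H_{ij} = n^{-1/2} (-1)^{⟨i,j⟩}` (0-indexed). -/
def walshHadamard (n : ℕ) : Fin n → Fin n → ℝ :=
  fun i j => (Real.sqrt n)⁻¹ * (-1 : ℝ) ^ bitDot (i : ℕ) (j : ℕ)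

/-- The fast Johnson–Lindenstrauss transform `Φ = A·H·D` where `D = diag d`. -/
def fjlt {m n : ℕ} (A : Fin m → Fin n → ℝ) (d : Fin n → ℝ) : Fin m → Fin n → ℝ :=
  matMul A (matMul (walshHadamard n) (fun i j => if i = j then d i else 0))

/-- The coefficient of `z^j` in `(1 + z + ⋯ + z^{lt-1})^r`. -/
def condCoeff (r lt : ℕ) (j : ℕ) : ℝ :=
  ((∑ i ∈ Finset.range lt, (Polynomial.X : Polynomial ℝ) ^ i) ^ r).coeff j

/-- The condensation vector `v ∈ ℝ^λ` of order `r`. -/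
def condVec (r lt lam : ℕ) : Fin lam → ℝ := fun j => condCoeff r lt (j : ℕ)

/-- The block matrix `I_p ⊗ v ∈ ℝ^{p × (λp)}` built from a row vector `v ∈ ℝ^λ`. -/
def kronRow {lam p : ℕ} (v : Fin lam → ℝ) (i : Fin p) (c : Fin (lam * p)) : ℝ :=
  if (c : ℕ) / lam = (i : ℕ) then
    v ⟨(c : ℕ) % lam, Nat.mod_lt _ (Nat.pos_of_ne_zero fun h => absurd c.isLt (by simp [h]))⟩
  else 0

/-- The condensation operator `V = I_p ⊗ v`. -/
def condOp (r lt lam p : ℕ) : Fin p → Fin (lam * p) → ℝ :=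
  kronRow (condVec r lt lam)

/-- The normalized condensation operator `Ṽ = (√(π/2)/(p‖v‖₂)) V`. -/
def normCondOp (r lt lam p : ℕ) : Fin p → Fin (lam * p) → ℝ :=
  fun i c => (Real.sqrt (Real.pi / 2) / ((p : ℝ) * l2Norm (condVec r lt lam))) *
    condOp r lt lam p i c

/-- The first-order difference matrix `P`. -/
def diffMat (m : ℕ) : Fin m → Fin m → ℝ :=
  fun i j => if (i : ℕ) = (j : ℕ) then 1 else if (i : ℕ) = (j : ℕ) + 1 then -1 else 0

/-- Pairing `(i, k) ↦ i·λ + k` as an index into `Fin (λ·p)`. -/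
def finPair {p lam : ℕ} (i : Fin p) (k : Fin lam) : Fin (lam * p) :=
  ⟨(i : ℕ) * lam + (k : ℕ), by
    calc (i : ℕ) * lam + (k : ℕ) < (i : ℕ) * lam + lam := Nat.add_lt_add_left k.isLt _
      _ = ((i : ℕ) + 1) * lam := by ring
      _ ≤ p * lam := Nat.mul_le_mul_right lam i.isLt
      _ = lam * p := Nat.mul_comm p lam⟩

/-- The Kronecker product `v^T ⊗ y ∈ ℝ^{λn}`, whose `(k·n + j)`-th entry is `v_k · y_j`. -/
def kronVec {lam n : ℕ} (v : Fin lam → ℝ) (y : Fin n → ℝ) : Fin (lam * n) → ℝ :=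
  fun c =>
    have hn : 0 < n := Nat.pos_of_ne_zero fun h => absurd c.isLt (by simp [h])
    v ⟨(c : ℕ) / n, (Nat.div_lt_iff_lt_mul hn).mpr c.isLt⟩ * y ⟨(c : ℕ) % n, Nat.mod_lt _ hn⟩

/-- Reshaping of an `(λp) × n` matrix into a `p × (λn)` matrix, with
`B_{i, k·n + j} = A_{i·λ + k, j}`. -/
def reshapeMat {lam p n : ℕ} (A : Fin (lam * p) → Fin n → ℝ) :
    Fin p → Fin (lam * n) → ℝ :=
  fun i c =>
    have hn : 0 < n := Nat.pos_of_ne_zero fun h => absurd c.isLt (by simp [h])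
    A (finPair i ⟨(c : ℕ) / n, (Nat.div_lt_iff_lt_mul hn).mpr c.isLt⟩)
      ⟨(c : ℕ) % n, Nat.mod_lt _ hn⟩

/-- The support `n_j = σ·j² + 1` (zero-indexed `j`, i.e. `σ(j-1)²+1` one-indexed). -/
def sigmaDeltaIdx (σ : ℕ) {r : ℕ} (j : Fin r) : ℕ := σ * (j : ℕ) ^ 2 + 1

/-- The filter coefficient `d_j = ∏_{i ≠ j} n_i / (n_i - n_j)`. -/
def sigmaDeltaCoef (σ : ℕ) {r : ℕ} (j : Fin r) : ℝ :=
  ∏ i ∈ Finset.univ.erase j,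
    (sigmaDeltaIdx σ i : ℝ) / ((sigmaDeltaIdx σ i : ℝ) - (sigmaDeltaIdx σ j : ℝ))

end

/-! Each coordinate of `H·D·x` is a Rademacher sum `∑ⱼ Hᵢⱼ xⱼ εⱼ`. Every entry of `H` has
modulus `n^{-1/2}`, so this sum is sub-Gaussian with variance proxy `‖x‖₂² / n`, and
Hoeffding's inequality bounds the probability that it exceeds `λ‖x‖₂` in modulus by
`2 exp(-nλ²/2)`. A union bound over the `n` coordinates concludes. -/

open Finset

lemma ProbabilityTheory.HasSubgaussianMGF.measureReal_le_abs_le {Ω : Type*} [MeasurableSpace Ω]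
    {μ : Measure Ω} {X : Ω → ℝ} {c : ℝ≥0} (h : HasSubgaussianMGF X c μ) {ε : ℝ} (hε : 0 ≤ ε) :
    μ.real {ω | ε ≤ |X ω|} ≤ 2 * Real.exp (-ε ^ 2 / (2 * c)) := by
  have hsplit : {ω | ε ≤ |X ω|} = {ω | ε ≤ X ω} ∪ {ω | ε ≤ (-X) ω} := by
    ext ω
    simp only [Set.mem_ofPred_eq, Set.mem_union, Pi.neg_apply, le_abs', le_neg, or_comm]
  calc μ.real {ω | ε ≤ |X ω|} ≤ μ.real {ω | ε ≤ X ω} + μ.real {ω | ε ≤ (-X) ω} :=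
        hsplit ▸ measureReal_union_le _ _
    _ ≤ Real.exp (-ε ^ 2 / (2 * c)) + Real.exp (-ε ^ 2 / (2 * c)) :=
        add_le_add (h.measure_ge_le hε) (h.neg.measure_ge_le hε)
    _ = 2 * Real.exp (-ε ^ 2 / (2 * c)) := (two_mul _).symm

instance isProbabilityMeasure_signLaw : IsProbabilityMeasure signLaw := by
  constructor
  simp [signLaw, ENNReal.smul_def, ENNReal.inv_two_add_inv_two]

instance isProbabilityMeasure_signVecLaw (n : ℕ) : IsProbabilityMeasure (signVecLaw n) := by
  unfold signVecLaw
  infer_instance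

lemma hasSubgaussianMGF_id_signLaw : HasSubgaussianMGF id 1 signLaw := by
  have h := hasSubgaussianMGF_of_mem_Icc_of_integral_eq_zero (μ := signLaw) (X := id)
    (a := -1) (b := 1) aemeasurable_id ?_ ?_
  · convert h
    norm_num
  · simp [signLaw, ae_add_measure_iff]
  · rw [signLaw, integral_add_measure, integral_smul_nnreal_measure, integral_smul_nnreal_measure]
    · simp
    all_goals exact (integrable_dirac (by simp)).smul_measure_nnreal

lemma hasSubgaussianMGF_sum_mul_signVecLaw {n : ℕ} (a : Fin n → ℝ) :
    HasSubgaussianMGF (fun v => ∑ j, a j * v j) (∑ j, ‖a j‖₊ ^ 2) (signVecLaw n) := by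
  have hindep : iIndepFun (fun j (v : Fin n → ℝ) => a j * v j) (signVecLaw n) :=
    iIndepFun_pi (X := fun j x => a j * x) fun j => by fun_prop
  refine HasSubgaussianMGF.sum_of_iIndepFun hindep fun j _ => ?_
  have hev := measurePreserving_eval (fun _ : Fin n => signLaw) j
  have h := hasSubgaussianMGF_id_signLaw.const_mul (a j)
  rw [← hev.map_eq] at h
  convert h.of_map hev.measurable.aemeasurable
  · rfl
  · ext
    change _ = a j ^ 2 * 1
    simp
  · rfl

lemma signVecLaw_real_le_abs_sum_mul_le {n : ℕ} (a : Fin n → ℝ) {ε : ℝ} (hε : 0 ≤ ε) :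
    (signVecLaw n).real {v | ε ≤ |∑ j, a j * v j|} ≤
      2 * Real.exp (-ε ^ 2 / (2 * ∑ j, a j ^ 2)) := by
  simpa using (hasSubgaussianMGF_sum_mul_signVecLaw a).measureReal_le_abs_le hε

lemma lInfNorm_le_iff {k : ℕ} {v : Fin k → ℝ} {c : ℝ} (hc : 0 ≤ c) :
    lInfNorm v ≤ c ↔ ∀ i, |v i| ≤ c :=
  ⟨fun h i => (le_ciSup (Set.finite_range _).bddAbove i).trans h, fun h => Real.iSup_le h hc⟩

lemma l2Norm_pos {k : ℕ} {x : Fin k → ℝ} (hx : x ≠ 0) : 0 < l2Norm x := by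
  obtain ⟨j, hj⟩ := Function.ne_iff.1 hx
  exact Real.sqrt_pos.2 <| sum_pos' (fun j _ => sq_nonneg (x j)) ⟨j, mem_univ j, sq_pos_iff.2 hj⟩

lemma walshHadamard_sq {n : ℕ} (i j : Fin n) : walshHadamard n i j ^ 2 = (n : ℝ)⁻¹ := by
  rw [walshHadamard, mul_pow, ← pow_mul, (even_two.mul_left _).neg_one_pow, mul_one, inv_pow,
    Real.sq_sqrt n.cast_nonneg]

lemma sum_sq_walshHadamard_mul {n : ℕ} (x : Fin n → ℝ) (i : Fin n) :
    ∑ j, (walshHadamard n i j * x j) ^ 2 = l2Norm x ^ 2 / n := by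
  simp_rw [mul_pow, walshHadamard_sq, ← Finset.mul_sum, l2Norm,
    Real.sq_sqrt (Finset.sum_nonneg fun j _ => sq_nonneg (x j))]
  ring

lemma matVec_walshHadamard_mul_apply {n : ℕ} (v x : Fin n → ℝ) (i : Fin n) :
    matVec (walshHadamard n) (fun j => v j * x j) i = ∑ j, walshHadamard n i j * x j * v j :=
  sum_congr rfl fun j _ => by ring

lemma signVecLaw_real_lt_abs_matVec_walshHadamard_le {n : ℕ} (x : Fin n → ℝ) {lam : ℝ}
    (hlam : 0 < lam) (i : Fin n) :
    (signVecLaw n).real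
        {v | lam * l2Norm x < |matVec (walshHadamard n) (fun j => v j * x j) i|} ≤
      2 * Real.exp (-n * lam ^ 2 / 2) := by
  rcases eq_or_ne x 0 with rfl | hx
  · simp [matVec, l2Norm]
    positivity
  have hx2 := l2Norm_pos hx
  calc _ ≤ (signVecLaw n).real
          {v | lam * l2Norm x ≤ |∑ j, walshHadamard n i j * x j * v j|} := by
        refine measureReal_mono fun v hv => ?_
        simp only [Set.mem_ofPred_eq, matVec_walshHadamard_mul_apply] at hv ⊢
        exact hv.le
    _ ≤ 2 * Real.exp (-(lam * l2Norm x) ^ 2 / (2 * ∑ j, (walshHadamard n i j * x j) ^ 2)) :=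
        signVecLaw_real_le_abs_sum_mul_le _ (by positivity)
    _ = 2 * Real.exp (-n * lam ^ 2 / 2) := by
        rw [sum_sq_walshHadamard_mul]
        field_simp

lemma signVecLaw_real_lt_lInfNorm_matVec_walshHadamard_le {n : ℕ} (x : Fin n → ℝ) {lam : ℝ}
    (hlam : 0 < lam) :
    (signVecLaw n).real
        {v | lam * l2Norm x < lInfNorm (matVec (walshHadamard n) (fun j => v j * x j))} ≤
      2 * n * Real.exp (-n * lam ^ 2 / 2) := by
  have hc : 0 ≤ lam * l2Norm x := mul_nonneg hlam.le (Real.sqrt_nonneg _)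
  calc _ ≤ (signVecLaw n).real
          (⋃ i, {v | lam * l2Norm x < |matVec (walshHadamard n) (fun j => v j * x j) i|}) :=
        measureReal_mono fun v hv => by
          simpa using mt (lInfNorm_le_iff hc).2 (not_le.2 hv)
    _ ≤ ∑ i : Fin n, 2 * Real.exp (-n * lam ^ 2 / 2) :=
        (measureReal_iUnion_fintype_le _).trans <| sum_le_sum fun i _ =>
          signVecLaw_real_lt_abs_matVec_walshHadamard_le x hlam i
    _ = 2 * n * Real.exp (-n * lam ^ 2 / 2) := by
        simp only [sum_const, card_univ, Fintype.card_fin, nsmul_eq_mul]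
        ring

theorem hadamard_flattening_general (n : ℕ)
    (Ω : Type) [MeasurableSpace Ω] (P : Measure Ω)
    (d : Ω → Fin n → ℝ) (hd : Measurable d) (hlaw : P.map d = signVecLaw n) :
    ∀ (x : Fin n → ℝ) (lam : ℝ), 0 < lam →
      ENNReal.ofReal (1 - 2 * (n : ℝ) * Real.exp (-(n : ℝ) * lam ^ 2 / 2)) ≤
        P {ω | lInfNorm (matVec (walshHadamard n) (fun j => d ω j * x j)) ≤
          lam * l2Norm x} := by
  intro x lam hlam
  set E := {v : Fin n → ℝ |
    lInfNorm (matVec (walshHadamard n) (fun j => v j * x j)) ≤ lam * l2Norm x}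
  have hE : MeasurableSet E :=
    measurableSet_le (Measurable.iSup fun i => by unfold matVec; fun_prop) measurable_const
  have hEc : (signVecLaw n).real Eᶜ ≤ 2 * n * Real.exp (-n * lam ^ 2 / 2) := by
    simpa only [E, Set.compl_ofPred, not_le] using
      signVecLaw_real_lt_lInfNorm_matVec_walshHadamard_le x hlam
  change _ ≤ P (d ⁻¹' E)
  rw [← Measure.map_apply hd hE, hlaw]
  apply ENNReal.ofReal_le_of_le_toReal
  rw [← measureReal_def]
  linarith [probReal_compl_eq_one_sub (μ := signVecLaw n) hE]

/-- ℓ^∞ concentration for the randomized Walsh–Hadamard transform `H·D`. -/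
theorem hadamard_flattening (n : ℕ) (hn : ∃ k : ℕ, n = 2 ^ k)
    (Ω : Type) [MeasurableSpace Ω] (P : Measure Ω) [IsProbabilityMeasure P]
    (d : Ω → Fin n → ℝ) (hd : Measurable d) (hlaw : P.map d = signVecLaw n) :
    ∀ (x : Fin n → ℝ) (lam : ℝ), 0 < lam →
      ENNReal.ofReal (1 - 2 * (n : ℝ) * Real.exp (-(n : ℝ) * lam ^ 2 / 2)) ≤
        P {ω | lInfNorm (matVec (walshHadamard n) (fun j => d ω j * x j)) ≤
          lam * l2Norm x} :=
  hadamard_flattening_general n Ω P d hd hlaw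
end

section
/- Let r, λ̃, p be positive integers, λ = r·λ̃ − r + 1, m = λ·p. Let v ∈ ℝ^λ be the condensation vector of order r, Ṽ = (√(π/2)/(p‖v‖₂))·(I_p ⊗ v) ∈ ℝ^{p×m} the normalized condensation operator, and P ∈ ℝ^{m×m} the first-order difference matrix. Then ‖Ṽ·P^r‖_{∞,1} ≤ √(π/2)·(8r)^{r+1}·λ^{−r+1/2}. -/
open MeasureTheory ProbabilityTheory Real
open scoped NNReal ENNReal

/-!
Row `i` of `V = I_p ⊗ v` lists the coefficients of `X ^ (i λ) * f`, where
`f = (1 + X + ⋯ + X ^ (λ̃ - 1)) ^ r`, and right multiplication by `P` acts on a window of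
coefficients as multiplication by `X - 1` (shifting the window by one). Hence row `i` of `V P ^ r`
is a window of coefficients of `X ^ (i λ) * f * (X - 1) ^ r = X ^ (i λ) * (X ^ λ̃ - 1) ^ r`, whose
coefficients have absolute sum at most `2 ^ r`; so `‖V P ^ r‖_{∞,1} ≤ p 2 ^ r`. On the other hand
Cauchy–Schwarz gives `‖v‖₂ ≥ f(1) / √λ = λ̃ ^ r / √λ`, and `λ ≤ r λ̃` turns
`√(π/2) 2 ^ r √λ / λ̃ ^ r` into the stated bound.
-/

open Polynomial Finset

namespace Polynomial

def coeffL1 (q : ℝ[X]) : ℝ := ∑ n ∈ q.support, |q.coeff n|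

lemma coeffL1_nonneg (q : ℝ[X]) : 0 ≤ q.coeffL1 :=
  sum_nonneg fun _ _ => abs_nonneg _

lemma coeffL1_eq_sum_of_support_subset {q : ℝ[X]} {s : Finset ℕ} (h : q.support ⊆ s) :
    q.coeffL1 = ∑ n ∈ s, |q.coeff n| :=
  sum_subset h fun n _ hn => by rw [notMem_support_iff.mp hn, abs_zero]

lemma sum_abs_coeff_le_coeffL1 (q : ℝ[X]) (s : Finset ℕ) : ∑ n ∈ s, |q.coeff n| ≤ q.coeffL1 := by
  rw [coeffL1_eq_sum_of_support_subset (subset_union_left (s₂ := s))]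
  exact sum_le_sum_of_subset_of_nonneg subset_union_right fun _ _ _ => abs_nonneg _

@[simp]
lemma coeffL1_zero : (0 : ℝ[X]).coeffL1 = 0 := by
  simp [coeffL1]

@[simp]
lemma coeffL1_neg (q : ℝ[X]) : (-q).coeffL1 = q.coeffL1 := by
  simp [coeffL1]

@[simp]
lemma coeffL1_monomial (n : ℕ) (a : ℝ) : (monomial n a).coeffL1 = |a| := by
  rcases eq_or_ne a 0 with rfl | ha
  · simp
  · simp [coeffL1, support_monomial n ha]

@[simp]
lemma coeffL1_X_pow (n : ℕ) : (X ^ n : ℝ[X]).coeffL1 = 1 := by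
  rw [← monomial_one_right_eq_X_pow, coeffL1_monomial, abs_one]

@[simp]
lemma coeffL1_one : (1 : ℝ[X]).coeffL1 = 1 := by
  simpa using coeffL1_X_pow 0

lemma coeffL1_add_le (q q' : ℝ[X]) : (q + q').coeffL1 ≤ q.coeffL1 + q'.coeffL1 := by
  rw [coeffL1_eq_sum_of_support_subset support_add,
    coeffL1_eq_sum_of_support_subset (subset_union_left (s₂ := q'.support)),
    coeffL1_eq_sum_of_support_subset (subset_union_right (s₁ := q.support)), ← sum_add_distrib]
  exact sum_le_sum fun n _ => by rw [coeff_add]; exact abs_add_le _ _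

lemma coeffL1_sub_le (q q' : ℝ[X]) : (q - q').coeffL1 ≤ q.coeffL1 + q'.coeffL1 := by
  simpa [sub_eq_add_neg] using coeffL1_add_le q (-q')

lemma coeffL1_sum_le {ι : Type*} (s : Finset ι) (f : ι → ℝ[X]) :
    (∑ i ∈ s, f i).coeffL1 ≤ ∑ i ∈ s, (f i).coeffL1 :=
  le_sum_of_subadditive coeffL1 coeffL1_zero.le coeffL1_add_le s f

lemma coeffL1_mul_le (q q' : ℝ[X]) : (q * q').coeffL1 ≤ q.coeffL1 * q'.coeffL1 := by
  calc (q * q').coeffL1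
      = (∑ a ∈ q.support, ∑ b ∈ q'.support, monomial (a + b) (q.coeff a * q'.coeff b)).coeffL1 := by
        rw [mul_eq_sum_sum]; rfl
    _ ≤ ∑ a ∈ q.support, ∑ b ∈ q'.support, |q.coeff a * q'.coeff b| := by
        refine (coeffL1_sum_le _ _).trans (sum_le_sum fun a _ => ?_)
        refine (coeffL1_sum_le _ _).trans_eq ?_
        simp only [coeffL1_monomial]
    _ = q.coeffL1 * q'.coeffL1 := by simp only [abs_mul, coeffL1, sum_mul_sum]

lemma coeffL1_pow_le (q : ℝ[X]) (r : ℕ) : (q ^ r).coeffL1 ≤ q.coeffL1 ^ r := by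
  induction r with
  | zero => simp
  | succ r ih =>
    rw [pow_succ, pow_succ]
    exact (coeffL1_mul_le _ _).trans (mul_le_mul_of_nonneg_right ih (coeffL1_nonneg q))

lemma coeffL1_X_pow_mul_X_pow_sub_one_pow_le (k l r : ℕ) :
    (X ^ k * (X ^ l - 1 : ℝ[X]) ^ r).coeffL1 ≤ 2 ^ r := by
  have h : (X ^ l - 1 : ℝ[X]).coeffL1 ≤ 2 := by
    simpa [one_add_one_eq_two] using coeffL1_sub_le (X ^ l : ℝ[X]) 1
  calc (X ^ k * (X ^ l - 1 : ℝ[X]) ^ r).coeffL1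
      ≤ (X ^ k : ℝ[X]).coeffL1 * ((X ^ l - 1 : ℝ[X]) ^ r).coeffL1 := coeffL1_mul_le _ _
    _ ≤ 2 ^ r := by
        rw [coeffL1_X_pow, one_mul]
        exact (coeffL1_pow_le _ _).trans (pow_le_pow_left₀ (coeffL1_nonneg _) h r)

end Polynomial

def coeffWindow (m k : ℕ) (q : ℝ[X]) : Fin m → ℝ := fun c => q.coeff (c + k)

lemma l1Norm_coeffWindow_le (m k : ℕ) (q : ℝ[X]) : l1Norm (coeffWindow m k q) ≤ q.coeffL1 := by
  calc l1Norm (coeffWindow m k q) = ∑ n ∈ Ico k (k + m), |q.coeff n| := by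
        rw [sum_Ico_eq_sum_range, Nat.add_sub_cancel_left, l1Norm,
          ← Fin.sum_univ_eq_sum_range (fun c => |q.coeff (k + c)|)]
        simp only [coeffWindow, add_comm]
    _ ≤ q.coeffL1 := sum_abs_coeff_le_coeffL1 q _

lemma vecMul_matPow_zero {a : ℕ} (M : Fin a → Fin a → ℝ) (x : Fin a → ℝ) :
    Matrix.vecMul x (matPow M 0) = x :=
  Matrix.vecMul_one x

lemma vecMul_matPow_succ {a : ℕ} (M : Fin a → Fin a → ℝ) (x : Fin a → ℝ) (r : ℕ) :
    Matrix.vecMul x (matPow M (r + 1)) = Matrix.vecMul (Matrix.vecMul x (matPow M r)) M :=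
  (Matrix.vecMul_vecMul x (matPow M r) M).symm

-- The degree bound makes the missing `c + 1 = m` term of the last backward difference vanish.
lemma vecMul_coeffWindow_diffMat {m k : ℕ} {q : ℝ[X]} (hq : q.natDegree < m + k) :
    Matrix.vecMul (coeffWindow m k q) (diffMat m) = coeffWindow m (k + 1) (q * (X - 1)) := by
  ext c
  have hdiff (b : ℕ) : (if b = c then 1 else if b = (c : ℕ) + 1 then -1 else 0 : ℝ) =
      (if b = c then 1 else 0) - (if b = (c : ℕ) + 1 then 1 else 0) := by
    split_ifs <;> first | omega | norm_num
  have hlast (hc : ¬ (c : ℕ) + 1 < m) : q.coeff (c + 1 + k) = 0 :=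
    coeff_eq_zero_of_natDegree_lt (by omega)
  calc Matrix.vecMul (coeffWindow m k q) (diffMat m) c
      = ∑ b ∈ range m, q.coeff (b + k) *
          (if b = c then 1 else if b = (c : ℕ) + 1 then -1 else 0) :=
        Fin.sum_univ_eq_sum_range (fun b => q.coeff (b + k) *
          (if b = c then 1 else if b = (c : ℕ) + 1 then -1 else 0)) m
    _ = q.coeff (c + k) - q.coeff (c + 1 + k) := by
        simp only [hdiff, mul_sub, mul_ite, mul_one, mul_zero, sum_sub_distrib, sum_ite_eq',
          mem_range, c.isLt, if_true]
        split_ifs with hc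
        · rfl
        · rw [hlast hc, sub_zero]
    _ = coeffWindow m (k + 1) (q * (X - 1)) c := by
        rw [coeffWindow, ← C_1, ← add_assoc, coeff_mul_X_sub_C, mul_one, add_right_comm]

lemma vecMul_coeffWindow_diffMat_pow {m k : ℕ} {q : ℝ[X]} (hq : q.natDegree < m + k) (r : ℕ) :
    Matrix.vecMul (coeffWindow m k q) (matPow (diffMat m) r) =
      coeffWindow m (k + r) (q * (X - 1) ^ r) := by
  induction r with
  | zero => rw [vecMul_matPow_zero, pow_zero, mul_one, add_zero]
  | succ r ih =>
    have hdeg : (q * (X - 1) ^ r).natDegree < m + (k + r) := by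
      have := natDegree_mul_le_of_le (le_refl q.natDegree)
        (natDegree_pow_le_of_le r (natDegree_X_sub_C_le (1 : ℝ)))
      rw [C_1] at this
      omega
    rw [vecMul_matPow_succ, ih, vecMul_coeffWindow_diffMat hdeg, mul_assoc, ← pow_succ, add_assoc]

lemma kronRow_coeff_eq_coeffWindow {lam p : ℕ} {q : ℝ[X]} (hq : q.natDegree < lam) (i : Fin p) :
    kronRow (fun j : Fin lam => q.coeff j) i = coeffWindow (lam * p) 0 (X ^ (i * lam : ℕ) * q) := by
  ext c
  simp only [kronRow, coeffWindow, add_zero, coeff_X_pow_mul']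
  split_ifs with hdiv hle hle
  · have hc := Nat.div_add_mod' c lam
    rw [hdiv] at hc
    congr 1
    omega
  · exact absurd (hdiv ▸ Nat.div_mul_le_self c lam) hle
  · refine (coeff_eq_zero_of_natDegree_lt (hq.trans_le ?_)).symm
    by_contra! hlt
    exact hdiv (Nat.div_eq_of_lt_le hle (by rw [Nat.succ_mul]; omega))
  · rfl

noncomputable def condPoly (r lt : ℕ) : ℝ[X] := (∑ i ∈ range lt, X ^ i) ^ r

lemma condVec_eq_coeff (r lt lam : ℕ) :
    condVec r lt lam = fun j : Fin lam => (condPoly r lt).coeff j :=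
  rfl

lemma condPoly_mul_X_sub_one_pow (r lt : ℕ) : condPoly r lt * (X - 1) ^ r = (X ^ lt - 1) ^ r := by
  rw [condPoly, ← mul_pow, geom_sum_mul]

lemma natDegree_condPoly_le (r lt : ℕ) : (condPoly r lt).natDegree ≤ r * (lt - 1) :=
  natDegree_pow_le_of_le r <| natDegree_sum_le_of_forall_le _ _ fun i hi => by
    rw [natDegree_X_pow]
    have := mem_range.mp hi
    omega

lemma eval_one_condPoly (r lt : ℕ) : (condPoly r lt).eval 1 = (lt : ℝ) ^ r := by
  simp [condPoly, eval_finsetSum]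

lemma l1Norm_condOp_mul_diffMat_pow_le {r lt lam p : ℕ} (hdeg : (condPoly r lt).natDegree < lam)
    (i : Fin p) :
    l1Norm (matMul (condOp r lt lam p) (matPow (diffMat (lam * p)) r) i) ≤ 2 ^ r := by
  have hshift : (X ^ (i * lam : ℕ) * condPoly r lt).natDegree < lam * p + 0 :=
    calc (X ^ (i * lam : ℕ) * condPoly r lt).natDegree ≤ i * lam + (condPoly r lt).natDegree :=
          natDegree_mul_le_of_le (natDegree_X_pow_le _) le_rfl
      _ < (i + 1) * lam := by rw [Nat.succ_mul]; omega
      _ ≤ lam * p + 0 := by rw [add_zero, Nat.mul_comm lam]; exact Nat.mul_le_mul_right lam i.isLt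
  change l1Norm (Matrix.vecMul (kronRow (condVec r lt lam) i) (matPow (diffMat (lam * p)) r)) ≤ _
  rw [condVec_eq_coeff, kronRow_coeff_eq_coeffWindow hdeg, vecMul_coeffWindow_diffMat_pow hshift,
    mul_assoc, condPoly_mul_X_sub_one_pow]
  exact (l1Norm_coeffWindow_le _ _ _).trans (coeffL1_X_pow_mul_X_pow_sub_one_pow_le _ _ _)

lemma abs_eval_one_le_sqrt_mul_l2Norm {lam : ℕ} {q : ℝ[X]} (hq : q.natDegree < lam) :
    |q.eval 1| ≤ √lam * l2Norm (fun j : Fin lam => q.coeff j) := by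
  have heval : q.eval 1 = ∑ j : Fin lam, q.coeff j := by
    rw [eval_eq_sum_range' hq, Fin.sum_univ_eq_sum_range (fun j => q.coeff j)]
    simp
  rw [l2Norm, ← Real.sqrt_mul (Nat.cast_nonneg lam), heval]
  refine Real.abs_le_sqrt ?_
  simpa using sq_sum_le_card_mul_sum_sq (s := univ) (f := fun j : Fin lam => q.coeff j)

lemma l2Norm_nonneg {k : ℕ} (x : Fin k → ℝ) : 0 ≤ l2Norm x :=
  Real.sqrt_nonneg _

lemma pow_div_sqrt_le_l2Norm_condVec {r lt lam : ℕ} (hdeg : (condPoly r lt).natDegree < lam) :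
    (lt : ℝ) ^ r / √lam ≤ l2Norm (condVec r lt lam) := by
  have := abs_eval_one_le_sqrt_mul_l2Norm hdeg
  rw [eval_one_condPoly, abs_of_nonneg (by positivity), ← condVec_eq_coeff] at this
  exact div_le_of_le_mul₀ (Real.sqrt_nonneg _) (l2Norm_nonneg _) (by linarith)

lemma abs_le_lInfNorm {k : ℕ} (x : Fin k → ℝ) (j : Fin k) : |x j| ≤ lInfNorm x :=
  le_ciSup (f := fun j => |x j|) (Set.finite_range _).bddAbove j

lemma l1Norm_smul {k : ℕ} (a : ℝ) (x : Fin k → ℝ) : l1Norm (a • x) = |a| * l1Norm x := by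
  simp [l1Norm, abs_mul, mul_sum]

lemma l1Norm_matVec_le {a b : ℕ} (K : Fin a → Fin b → ℝ) (x : Fin b → ℝ) :
    l1Norm (matVec K x) ≤ (∑ i, l1Norm (K i)) * lInfNorm x := by
  calc l1Norm (matVec K x) ≤ ∑ i, ∑ j, |K i j| * |x j| :=
        sum_le_sum fun i _ => (abs_sum_le_sum_abs _ _).trans_eq (by simp only [abs_mul])
    _ ≤ ∑ i, ∑ j, |K i j| * lInfNorm x := by gcongr with i _ j _; exact abs_le_lInfNorm x j
    _ = (∑ i, l1Norm (K i)) * lInfNorm x := by simp only [l1Norm, sum_mul]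

lemma opNormInfOne_le_sum_l1Norm {a b : ℕ} (K : Fin a → Fin b → ℝ) :
    opNormInfOne K ≤ ∑ i, l1Norm (K i) := by
  have hnonneg : 0 ≤ ∑ i, l1Norm (K i) := sum_nonneg fun _ _ => sum_nonneg fun _ _ => abs_nonneg _
  refine Real.sSup_le ?_ hnonneg
  rintro t ⟨x, hx, rfl⟩
  obtain ⟨j, hj⟩ := Function.ne_iff.mp hx
  have hpos : 0 < lInfNorm x := (abs_pos.mpr hj).trans_le (abs_le_lInfNorm x j)
  exact div_le_of_le_mul₀ hpos.le hnonneg (l1Norm_matVec_le K x)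

lemma opNormInfOne_normCondOp_mul_diffMat_pow_le {r lt lam p : ℕ}
    (hdeg : (condPoly r lt).natDegree < lam) (hp : 0 < p) :
    opNormInfOne (matMul (normCondOp r lt lam p) (matPow (diffMat (lam * p)) r)) ≤
      √(π / 2) * (2 ^ r / l2Norm (condVec r lt lam)) := by
  set s := √(π / 2) / (p * l2Norm (condVec r lt lam)) with hs
  have hrow (i : Fin p) : matMul (normCondOp r lt lam p) (matPow (diffMat (lam * p)) r) i =
      s • matMul (condOp r lt lam p) (matPow (diffMat (lam * p)) r) i := by
    ext c
    simp only [matMul, normCondOp, Pi.smul_apply, smul_eq_mul, mul_sum, mul_assoc, hs]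
  have hs_nonneg : 0 ≤ s := div_nonneg (Real.sqrt_nonneg _) (mul_nonneg p.cast_nonneg (l2Norm_nonneg _))
  calc _ ≤ ∑ i, l1Norm (matMul (normCondOp r lt lam p) (matPow (diffMat (lam * p)) r) i) :=
        opNormInfOne_le_sum_l1Norm _
    _ = ∑ i, s * l1Norm (matMul (condOp r lt lam p) (matPow (diffMat (lam * p)) r) i) := by
        simp only [hrow, l1Norm_smul, abs_of_nonneg hs_nonneg]
    _ ≤ ∑ _i : Fin p, s * 2 ^ r := by
        gcongr with i
        exact l1Norm_condOp_mul_diffMat_pow_le hdeg i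
    _ = √(π / 2) * (2 ^ r / l2Norm (condVec r lt lam)) := by
        rw [sum_const, card_univ, Fintype.card_fin, nsmul_eq_mul, hs]
        field_simp

lemma two_pow_mul_sqrt_div_pow_le {r lt lam : ℕ} (hr : 0 < r) (hlam : 0 < lam)
    (hle : lam ≤ r * lt) :
    2 ^ r * √lam / (lt : ℝ) ^ r ≤ (8 * (r : ℝ)) ^ (r + 1) * (lam : ℝ) ^ (-(r : ℝ) + 1 / 2) := by
  have hlamR : (0 : ℝ) < lam := Nat.cast_pos.mpr hlam
  have hltR : (0 : ℝ) < lt := Nat.cast_pos.mpr (Nat.pos_of_mul_pos_left (hlam.trans_le hle))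
  have hr1 : (1 : ℝ) ≤ r := Nat.one_le_cast.mpr hr
  have hleR : (lam : ℝ) ≤ r * lt := by exact_mod_cast hle
  have key : 2 ^ r * (lam : ℝ) ^ r ≤ (8 * r) ^ (r + 1) * lt ^ r :=
    calc 2 ^ r * (lam : ℝ) ^ r ≤ (8 * r * lt) ^ r := by
          rw [← mul_pow]; exact pow_le_pow_left₀ (by positivity) (by nlinarith) r
      _ = (8 * r) ^ r * lt ^ r := mul_pow _ _ _
      _ ≤ (8 * r) ^ (r + 1) * lt ^ r := by gcongr; linarith; omega
  rw [Real.rpow_add hlamR, Real.rpow_neg hlamR.le, Real.rpow_natCast, ← Real.sqrt_eq_rpow,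
    mul_div_right_comm, mul_comm, ← mul_assoc, ← div_eq_mul_inv, mul_comm _ √_]
  refine mul_le_mul_of_nonneg_left ?_ (Real.sqrt_nonneg _)
  rwa [div_le_div_iff₀ (by positivity) (by positivity)]

/-- Bound on the (∞,1) operator norm of `Ṽ·P^r`. -/
theorem normCondOp_diffPow_opNorm_le (r lt p : ℕ) (hr : 0 < r) (hlt : 0 < lt)
    (hp : 0 < p) (lam : ℕ) (hlam : lam = r * lt - r + 1) :
    opNormInfOne (matMul (normCondOp r lt lam p) (matPow (diffMat (lam * p)) r)) ≤
      Real.sqrt (Real.pi / 2) * (8 * (r : ℝ)) ^ (r + 1) *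
        (lam : ℝ) ^ (-(r : ℝ) + 1 / 2) := by
  have hdeg : (condPoly r lt).natDegree < lam :=
    (natDegree_condPoly_le r lt).trans_lt (by rw [Nat.mul_sub_one]; omega)
  have hlam_le : lam ≤ r * lt := by
    have := Nat.le_mul_of_pos_right r hlt
    omega
  have hv := pow_div_sqrt_le_l2Norm_condVec hdeg
  have hv_pos : (0 : ℝ) < lt ^ r / √lam := by
    have : 0 < lam := by omega
    positivity
  calc _ ≤ √(π / 2) * (2 ^ r / l2Norm (condVec r lt lam)) :=
        opNormInfOne_normCondOp_mul_diffMat_pow_le hdeg hp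
    _ ≤ √(π / 2) * (2 ^ r * √lam / lt ^ r) := by
        rw [← div_div_eq_mul_div]
        gcongr
    _ ≤ _ := by
        rw [mul_assoc]
        exact mul_le_mul_of_nonneg_left (two_pow_mul_sqrt_div_pow_le hr (by omega) hlam_le)
          (Real.sqrt_nonneg _)
end

section
/- Let r, λ̃ be positive integers and λ = r·λ̃ − r + 1. Then the condensation vector v ∈ ℝ^λ of order r satisfies ‖v‖₂ ≥ λ^{r−1/2}·r^{−r}. -/
open MeasureTheory ProbabilityTheory Real
open scoped NNReal ENNReal

/-! Evaluating `(1 + z + ⋯ + z^{λ̃-1})^r` at `z = 1` shows that the entries of `v` sum to `λ̃^r`,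
so Cauchy–Schwarz gives `‖v‖₂ ≥ λ̃^r / √λ`; since `λ ≤ r λ̃`, this is at least
`(λ / r)^r / √λ = λ^{r-1/2} r^{-r}`. -/

open Finset Polynomial

theorem Polynomial.sum_range_coeff_eq_eval_one {R : Type*} [Semiring R] {p : R[X]} {n : ℕ}
    (hn : p.natDegree < n) : ∑ i ∈ range n, p.coeff i = p.eval 1 := by
  simpa using (eval_eq_sum_range' hn 1).symm

theorem natDegree_geomSum_X_pow_le {R : Type*} [Semiring R] (n r : ℕ) :
    ((∑ i ∈ range n, (X : R[X]) ^ i) ^ r).natDegree ≤ r * (n - 1) := by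
  refine natDegree_pow_le_of_le r (natDegree_sum_le_of_forall_le _ _ fun i hi => ?_)
  exact (natDegree_X_pow_le i).trans (Nat.le_sub_one_of_lt (mem_range.mp hi))

theorem sum_condVec {r lt lam : ℕ} (hlam : r * (lt - 1) < lam) :
    ∑ i, condVec r lt lam i = (lt : ℝ) ^ r := by
  change ∑ i : Fin lam, condCoeff r lt i = _
  rw [Fin.sum_univ_eq_sum_range (condCoeff r lt)]
  unfold condCoeff
  rw [sum_range_coeff_eq_eval_one ((natDegree_geomSum_X_pow_le lt r).trans_lt hlam)]
  simp [eval_finsetSum]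

theorem sum_le_l2Norm_mul_sqrt_card {k : ℕ} (x : Fin k → ℝ) :
    ∑ i, x i ≤ l2Norm x * √k := by
  rw [l2Norm, ← Real.sqrt_mul' _ (Nat.cast_nonneg k)]
  refine (le_abs_self _).trans (Real.abs_le_sqrt ?_)
  simpa [mul_comm] using sq_sum_le_card_mul_sum_sq (s := univ) (f := x)

theorem rpow_sub_half_mul_rpow_neg (n : ℕ) {a b : ℝ} (ha : 0 < a) (hb : 0 ≤ b) :
    a ^ ((n : ℝ) - 1 / 2) * b ^ (-(n : ℝ)) = (a / b) ^ n / √a := by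
  rw [Real.rpow_sub ha, Real.rpow_natCast, Real.rpow_neg hb, Real.rpow_natCast,
    Real.sqrt_eq_rpow, div_pow]
  ring

/-- Lower bound on the ℓ² norm of the condensation vector. -/
theorem condVec_l2Norm_ge (r lt : ℕ) (hr : 0 < r) (hlt : 0 < lt)
    (lam : ℕ) (hlam : lam = r * lt - r + 1) :
    (lam : ℝ) ^ ((r : ℝ) - 1 / 2) * (r : ℝ) ^ (-(r : ℝ)) ≤
      l2Norm (condVec r lt lam) := by
  have hlam_le : (lam : ℝ) ≤ r * lt := by
    have := Nat.le_mul_of_pos_right r hlt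
    exact_mod_cast (show lam ≤ r * lt by omega)
  have hsum : ∑ i, condVec r lt lam i = (lt : ℝ) ^ r :=
    sum_condVec (by rw [Nat.mul_sub_one]; omega)
  have hlam_pos : (0 : ℝ) < lam := by rw [hlam]; positivity
  rw [rpow_sub_half_mul_rpow_neg r hlam_pos (Nat.cast_nonneg r)]
  calc ((lam : ℝ) / r) ^ r / √lam ≤ (lt : ℝ) ^ r / √lam := by
        gcongr
        rwa [div_le_iff₀' (by exact_mod_cast hr)]
    _ = (∑ i, condVec r lt lam i) / √lam := by rw [hsum]
    _ ≤ l2Norm (condVec r lt lam) :=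
        div_le_of_le_mul₀ (Real.sqrt_nonneg _) (Real.sqrt_nonneg _)
          (sum_le_l2Norm_mul_sqrt_card _)
end
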